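/- Let V = V₁ ⊕ ⋯ ⊕ V_t be a direct sum of R-modules, and for each j let m_j : V → V be an R-linear automorphism with m_j(v) - v ∈ V_j for all v. If m_j' is another such family (m_j'(v) - v ∈ V_j for all v) and m_t ∘ ⋯ ∘ m₁ = m_t' ∘ ⋯ ∘ m₁', then m_j = m_j' for all j. -/

import Mathlib

/-!
Write `P k = m (k-1) ∘ ⋯ ∘ m 0` for `compUpTo m k`. Since `m i` only moves coordinate `i`, `P k`
fixes every coordinate of index `≥ k`. Hence `P (k+1) v = m k (P k v)` agrees with `P k v` off
coordinate `k` and with `v` at coordinate `k`, so `P (k+1)` determines `P k`, and then also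
`m k = P (k+1) ∘ (P k)⁻¹`. Descending induction from `P t = P' t` recovers every factor.
-/

def compUpTo {R : Type*} [CommRing R] {t : ℕ} {V : Fin t → Type*}
    [∀ i, AddCommGroup (V i)] [∀ i, Module R (V i)]
    (m : Fin t → ((∀ i, V i) ≃ₗ[R] (∀ i, V i))) : ℕ → ((∀ i, V i) ≃ₗ[R] (∀ i, V i))
  | 0 => LinearEquiv.refl R _
  | k + 1 => if h : k < t then (compUpTo m k).trans (m ⟨k, h⟩) else compUpTo m k

theorem LinearEquiv.eq_and_eq_of_trans_eq_trans {R ι : Type*} [Semiring R] {V : ι → Type*}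
    [∀ i, AddCommMonoid (V i)] [∀ i, Module R (V i)] {e e' f f' : (∀ i, V i) ≃ₗ[R] (∀ i, V i)}
    {j : ι} (he : ∀ x, e x j = x j) (he' : ∀ x, e' x j = x j)
    (hf : ∀ x i, i ≠ j → f x i = x i) (hf' : ∀ x i, i ≠ j → f' x i = x i)
    (h : e.trans f = e'.trans f') : e = e' ∧ f = f' := by
  have hfe (x) : f (e x) = f' (e' x) := LinearEquiv.congr_fun h x
  have hee' : e = e' := by
    ext x i
    by_cases hij : i = j
    · subst hij
      rw [he, he']
    · rw [← hf (e x) i hij, ← hf' (e' x) i hij, hfe]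
  refine ⟨hee', LinearEquiv.ext fun y => ?_⟩
  obtain ⟨x, rfl⟩ := e.surjective y
  rw [hfe, hee']

namespace compUpTo

variable {R : Type*} [CommRing R] {t : ℕ} {V : Fin t → Type*}
    [∀ i, AddCommGroup (V i)] [∀ i, Module R (V i)] {m m' : Fin t → ((∀ i, V i) ≃ₗ[R] (∀ i, V i))}

theorem succ_of_lt {k : ℕ} (hk : k < t) :
    compUpTo m (k + 1) = (compUpTo m k).trans (m ⟨k, hk⟩) := by
  rw [compUpTo, dif_pos hk]

theorem apply_of_le (hm : ∀ j : Fin t, ∀ v : ∀ i, V i, ∀ i, i ≠ j → (m j v - v) i = 0)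
    {k : ℕ} (v : ∀ i, V i) {i : Fin t} (hki : k ≤ i) : compUpTo m k v i = v i := by
  induction k with
  | zero => rfl
  | succ k ih =>
    have hk : k < t := by omega
    rw [succ_of_lt hk, LinearEquiv.trans_apply,
      ← ih (by omega), ← sub_eq_zero]
    exact hm _ _ i (Fin.ne_of_val_ne (Nat.ne_of_gt hki))

theorem eq_and_eq_of_succ (hm : ∀ j : Fin t, ∀ v : ∀ i, V i, ∀ i, i ≠ j → (m j v - v) i = 0)
    (hm' : ∀ j : Fin t, ∀ v : ∀ i, V i, ∀ i, i ≠ j → (m' j v - v) i = 0)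
    {k : ℕ} (hk : k < t) (h : compUpTo m (k + 1) = compUpTo m' (k + 1)) :
    compUpTo m k = compUpTo m' k ∧ m ⟨k, hk⟩ = m' ⟨k, hk⟩ := by
  rw [succ_of_lt hk, succ_of_lt hk] at h
  exact LinearEquiv.eq_and_eq_of_trans_eq_trans (fun v => apply_of_le hm v le_rfl)
    (fun v => apply_of_le hm' v le_rfl) (fun v i hi => sub_eq_zero.mp (hm _ v i hi))
    (fun v i hi => sub_eq_zero.mp (hm' _ v i hi)) h

theorem eq_of_le (hm : ∀ j : Fin t, ∀ v : ∀ i, V i, ∀ i, i ≠ j → (m j v - v) i = 0)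
    (hm' : ∀ j : Fin t, ∀ v : ∀ i, V i, ∀ i, i ≠ j → (m' j v - v) i = 0)
    (h : compUpTo m t = compUpTo m' t) {k : ℕ} (hkt : k ≤ t) : compUpTo m k = compUpTo m' k := by
  induction hkt using Nat.decreasingInduction with
  | self => exact h
  | of_succ k hk ih => exact (eq_and_eq_of_succ hm hm' hk ih).1

end compUpTo

/-- The product m_t ∘ ⋯ ∘ m₁ together with the decomposition determines each factor. -/
theorem stmt2 {R : Type*} [CommRing R] {t : ℕ} {V : Fin t → Type*}
    [∀ i, AddCommGroup (V i)] [∀ i, Module R (V i)]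
    (m m' : Fin t → ((∀ i, V i) ≃ₗ[R] (∀ i, V i)))
    (hm : ∀ j : Fin t, ∀ v : ∀ i, V i, ∀ i, i ≠ j → (m j v - v) i = 0)
    (hm' : ∀ j : Fin t, ∀ v : ∀ i, V i, ∀ i, i ≠ j → (m' j v - v) i = 0)
    (h : compUpTo m t = compUpTo m' t) :
    ∀ j, m j = m' j := fun j =>
  (compUpTo.eq_and_eq_of_succ hm hm' j.isLt (compUpTo.eq_of_le hm hm' h j.isLt)).2
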